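/- (Equation (3.11), Theorem 3.3.) For every X ∈ V one has R(ξ, X)ξ = (α₀² + β₀² − dβ(ξ))(X − η(X)ξ). -/

import Mathlib

/-!
Putting `X = ξ` in the curvature identity gives `R(ξ, X)ξ = s (X - η(X)ξ) + c φX` with
`s = α₀² + β₀² - dβ(ξ)` and `c = 2α₀β₀ - dα(ξ)`. Pair symmetry makes `X ↦ R(ξ, X)ξ` self-adjoint
for `g`, as is the projection `X ↦ X - η(X)ξ`, while the compatibility of `g` with `φ` makes
`φ` skew-adjoint. Hence `c φ` is both self- and skew-adjoint, so `c φ = 0`; and `φ ≠ 0`, since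
otherwise `φ² X = X - η(X)ξ` would force `V` to be spanned by `ξ`. So `c = 0`.
-/

open LinearMap Module

theorem LinearMap.BilinForm.eq_zero_of_isSelfAdjoint_of_isSkewAdjoint {V : Type*}
    [AddCommGroup V] [Module ℝ V] {g : LinearMap.BilinForm ℝ V} (hg : g.Nondegenerate)
    {A : V →ₗ[ℝ] V} (hsymm : g.IsSelfAdjoint A) (hskew : g.IsSkewAdjoint A) : A = 0 := by
  have hneg : IsAdjointPair g g (-A) A := by simpa using hskew.smul (-1 : ℝ)
  have h : A = -A := g.isAdjointPair_unique_of_nondegenerate hg A A (-A) hsymm hneg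
  have h2 : (2 : ℝ) • A = 0 := by rw [two_smul]; nth_rw 1 [h]; exact neg_add_cancel A
  exact (smul_eq_zero.mp h2).resolve_left two_ne_zero

namespace AlmostParacontactMetric

variable {V : Type*} [AddCommGroup V] [Module ℝ V] {g : LinearMap.BilinForm ℝ V}
  {φ : V →ₗ[ℝ] V} {ξ : V} {η : V →ₗ[ℝ] ℝ}

theorem bilin_apply_reeb (hφξ : φ ξ = 0) (hηξ : η ξ = 1)
    (hgφ : ∀ X Y : V, g (φ X) (φ Y) = - g X Y + η X * η Y) (X : V) : g X ξ = η X := by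
  have h := hgφ X ξ
  rw [hφξ, hηξ, map_zero, mul_one] at h
  linarith

theorem bilin_reeb_apply (hφξ : φ ξ = 0) (hηξ : η ξ = 1)
    (hgφ : ∀ X Y : V, g (φ X) (φ Y) = - g X Y + η X * η Y) (X : V) : g ξ X = η X := by
  have h := hgφ ξ X
  rw [hφξ, hηξ, map_zero, LinearMap.zero_apply, one_mul] at h
  linarith

theorem isSkewAdjoint_phi (hφξ : φ ξ = 0) (hηφ : ∀ X : V, η (φ X) = 0)
    (hηξ : η ξ = 1) (hφ2 : ∀ X : V, φ (φ X) = X - η X • ξ)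
    (hgφ : ∀ X Y : V, g (φ X) (φ Y) = - g X Y + η X * η Y) : g.IsSkewAdjoint φ := by
  intro X W
  have h := hgφ X (φ W)
  rw [hφ2, map_sub, map_smul, bilin_apply_reeb hφξ hηξ hgφ, hηφ, hηφ,
    smul_zero, sub_zero, mul_zero, add_zero] at h
  rw [Pi.neg_apply, map_neg, h]

theorem isSelfAdjoint_id_sub_smulRight (hφξ : φ ξ = 0) (hηξ : η ξ = 1)
    (hgφ : ∀ X Y : V, g (φ X) (φ Y) = - g X Y + η X * η Y) :
    g.IsSelfAdjoint (LinearMap.id - η.smulRight ξ : V →ₗ[ℝ] V) := by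
  intro X W
  simp only [LinearMap.sub_apply, LinearMap.id_apply, LinearMap.smulRight_apply, map_sub,
    map_smul, LinearMap.smul_apply, smul_eq_mul,
    bilin_apply_reeb hφξ hηξ hgφ, bilin_reeb_apply hφξ hηξ hgφ]
  ring

theorem phi_ne_zero_of_one_lt_finrank (hφ2 : ∀ X : V, φ (φ X) = X - η X • ξ)
    (hdim : 1 < finrank ℝ V) : φ ≠ 0 := by
  rintro rfl
  refine hdim.not_ge (finrank_le_one ξ fun X => ⟨η X, ?_⟩)
  have h := hφ2 X
  simp only [LinearMap.zero_apply] at h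
  exact (sub_eq_zero.mp h.symm).symm

end AlmostParacontactMetric

def IsTransParaSasakianCurvature {V : Type*} [AddCommGroup V] [Module ℝ V]
    (R : V →ₗ[ℝ] V →ₗ[ℝ] V →ₗ[ℝ] V) (φ : V →ₗ[ℝ] V) (ξ : V) (η : V →ₗ[ℝ] ℝ)
    (α₀ β₀ : ℝ) (dα dβ : V →ₗ[ℝ] ℝ) : Prop :=
  ∀ X Y : V, R X Y ξ =
    -((α₀ ^ 2 + β₀ ^ 2) • (η Y • X - η X • Y))
    - (2 * α₀ * β₀) • (η Y • φ X - η X • φ Y)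
    - dα X • φ Y + dα Y • φ X + dβ Y • φ (φ X) - dβ X • φ (φ Y)

theorem IsTransParaSasakianCurvature.flip_apply_reeb {V : Type*} [AddCommGroup V]
    [Module ℝ V] {R : V →ₗ[ℝ] V →ₗ[ℝ] V →ₗ[ℝ] V} {φ : V →ₗ[ℝ] V} {ξ : V} {η : V →ₗ[ℝ] ℝ}
    {α₀ β₀ : ℝ} {dα dβ : V →ₗ[ℝ] ℝ} (hR : IsTransParaSasakianCurvature R φ ξ η α₀ β₀ dα dβ)
    (hφξ : φ ξ = 0) (hηξ : η ξ = 1) (hφ2 : ∀ X : V, φ (φ X) = X - η X • ξ) :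
    (R ξ).flip ξ = (α₀ ^ 2 + β₀ ^ 2 - dβ ξ) • (LinearMap.id - η.smulRight ξ)
      + (2 * α₀ * β₀ - dα ξ) • φ := by
  ext X
  simp only [LinearMap.flip_apply, hR ξ X, hφξ, hηξ, hφ2, map_zero, smul_zero, one_smul,
    LinearMap.add_apply, LinearMap.smul_apply, LinearMap.sub_apply, LinearMap.id_apply,
    LinearMap.smulRight_apply]
  module

theorem stmt_4
    (n : ℕ) (hn : 1 ≤ n)
    (V : Type*) [AddCommGroup V] [Module ℝ V]
    (hdim : Module.finrank ℝ V = 2 * n + 1)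
    (g : LinearMap.BilinForm ℝ V)
    (hg_symm : ∀ X Y : V, g X Y = g Y X)
    (hg_nondeg : g.Nondegenerate)
    (φ : V →ₗ[ℝ] V) (ξ : V) (η : V →ₗ[ℝ] ℝ)
    (hφξ : φ ξ = 0) (hηφ : ∀ X : V, η (φ X) = 0)
    (hηξ : η ξ = 1) (hφ2 : ∀ X : V, φ (φ X) = X - η X • ξ)
    (hgφ : ∀ X Y : V, g (φ X) (φ Y) = - g X Y + η X * η Y)
    (R : V →ₗ[ℝ] V →ₗ[ℝ] V →ₗ[ℝ] V)
    (hR_pair : ∀ X Y Z W : V, g (R X Y Z) W = g (R Z W X) Y)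
    (α₀ β₀ : ℝ) (dα dβ : V →ₗ[ℝ] ℝ)
    (hTPS : ∀ X Y : V, R X Y ξ =
      -((α₀ ^ 2 + β₀ ^ 2) • (η Y • X - η X • Y))
      - (2 * α₀ * β₀) • (η Y • φ X - η X • φ Y)
      - dα X • φ Y + dα Y • φ X + dβ Y • φ (φ X) - dβ X • φ (φ Y))
    :
    ∀ X : V, R ξ X ξ = (α₀ ^ 2 + β₀ ^ 2 - dβ ξ) • (X - η X • ξ) := by
  have hRξ := IsTransParaSasakianCurvature.flip_apply_reeb hTPS hφξ hηξ hφ2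
  have hRξ_symm : g.IsSelfAdjoint ((R ξ).flip ξ) := fun X W => by
    simpa [hg_symm X] using hR_pair ξ X ξ W
  have hP_symm := AlmostParacontactMetric.isSelfAdjoint_id_sub_smulRight hφξ hηξ hgφ
  have hφ_skew := AlmostParacontactMetric.isSkewAdjoint_phi hφξ hηφ hηξ hφ2 hgφ
  have hφ_ne := AlmostParacontactMetric.phi_ne_zero_of_one_lt_finrank hφ2 (by omega)
  have hcφ : (2 * α₀ * β₀ - dα ξ) • φ = 0 := by
    refine g.eq_zero_of_isSelfAdjoint_of_isSkewAdjoint hg_nondeg ?_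
      (by simpa [IsSkewAdjoint] using hφ_skew.smul (2 * α₀ * β₀ - dα ξ))
    rw [eq_sub_of_add_eq' hRξ.symm]
    exact hRξ_symm.sub (hP_symm.smul _)
  have hc : 2 * α₀ * β₀ - dα ξ = 0 := (smul_eq_zero.mp hcφ).resolve_right hφ_ne
  intro X
  simpa [hc] using LinearMap.congr_fun hRξ X
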